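/- arXiv:2502.07369 — 6 statements merged into one kernel-verified Lean document; each statement's English description precedes it below -/
import Mathlib

section
/- Let (Ω, μ) be a probability space, λ > 0, and let k : Ω → ℝ^m and l : Ω → ℝ^p be measurable maps with ‖k(x)‖ ≤ C and ‖l(x)‖ ≤ C for all x. Define Σ₁ = ∫ k(x) k(x)ᵀ dμ(x) (an m×m matrix), Σ₂ = ∫ l(x) l(x)ᵀ dμ(x) (a p×p matrix), and the cross-covariance C₁₂ = ∫ k(x) l(x)ᵀ dμ(x) (an m×p matrix). Then Σ₁ + λI and Σ₂ + λI are invertible and ∫∫ ( k(x)ᵀ (Σ₁+λI)⁻¹ k(x') − l(x)ᵀ (Σ₂+λI)⁻¹ l(x') )² dμ(x) dμ(x') = Tr((Σ₁+λI)⁻¹ Σ₁ (Σ₁+λI)⁻¹ Σ₁) + Tr((Σ₂+λI)⁻¹ Σ₂ (Σ₂+λI)⁻¹ Σ₂) − 2 Tr((Σ₁+λI)⁻¹ C₁₂ (Σ₂+λI)⁻¹ C₁₂ᵀ). -/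
/-!
Stack the features into `w x = (k x, l x)` and let `M = diag(A, -B)` with `A = (Σ₁ + λI)⁻¹`,
`B = (Σ₂ + λI)⁻¹`. The integrand is then `(w xᵀ M w x')²`, and for any matrix `M` the double
integral of this square is `Tr (M W Mᵀ W)`, where `W = E[w wᵀ]` is the block matrix
`[[Σ₁, C₁₂], [C₁₂ᵀ, Σ₂]]`. Expanding the blocks, the two off-diagonal contributions agree by
cyclicity of the trace. Invertibility holds because `Σᵢ` is positive semidefinite, so `Σᵢ + λI` is
positive definite.
-/

open MeasureTheory Matrix
open scoped ENNReal

section CrossMoment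

variable {Ω ι κ ι' κ' : Type*} [MeasurableSpace Ω] (μ : Measure Ω)

noncomputable def crossMoment (f : Ω → ι → ℝ) (g : Ω → κ → ℝ) : Matrix ι κ ℝ :=
  of fun i j => ∫ x, f x i * g x j ∂μ

lemma transpose_crossMoment (f : Ω → ι → ℝ) (g : Ω → κ → ℝ) :
    (crossMoment μ f g)ᵀ = crossMoment μ g f := by
  ext i j
  simp only [crossMoment, transpose_apply, of_apply, mul_comm]

lemma crossMoment_sumElim (f : Ω → ι → ℝ) (g : Ω → κ → ℝ) (f' : Ω → ι' → ℝ) (g' : Ω → κ' → ℝ) :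
    crossMoment μ (fun x => Sum.elim (f x) (g x)) (fun x => Sum.elim (f' x) (g' x)) =
      fromBlocks (crossMoment μ f f') (crossMoment μ f g')
        (crossMoment μ g f') (crossMoment μ g g') := by
  ext (i | i) (j | j) <;> rfl

variable {μ} [Fintype ι] {f : Ω → ι → ℝ}

lemma integral_sum_sum_mul (hf : ∀ i, MemLp (fun x => f x i) 2 μ) (N : Matrix ι ι ℝ) :
    ∫ x, ∑ i, ∑ j, N i j * (f x i * f x j) ∂μ = ∑ i, ∑ j, N i j * crossMoment μ f f i j := by
  have hint (i j : ι) : Integrable (fun x => N i j * (f x i * f x j)) μ :=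
    ((hf i).integrable_mul (hf j)).const_mul _
  rw [integral_finsetSum _ fun i _ => integrable_finsetSum _ fun j _ => hint i j]
  refine Finset.sum_congr rfl fun i _ => ?_
  rw [integral_finsetSum _ fun j _ => hint i j]
  simp only [integral_const_mul, crossMoment, of_apply]

lemma integral_dotProduct_mul_dotProduct (hf : ∀ i, MemLp (fun x => f x i) 2 μ) (a b : ι → ℝ) :
    ∫ x, (a ⬝ᵥ f x) * (b ⬝ᵥ f x) ∂μ = a ⬝ᵥ crossMoment μ f f *ᵥ b := by
  have h (x : Ω) : (a ⬝ᵥ f x) * (b ⬝ᵥ f x) = ∑ i, ∑ j, vecMulVec a b i j * (f x i * f x j) := by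
    simp only [dotProduct, Finset.sum_mul_sum, vecMulVec_apply]
    exact Fintype.sum_congr _ _ fun i => Fintype.sum_congr _ _ fun j => by ring
  simp_rw [h, integral_sum_sum_mul hf, dotProduct, mulVec, dotProduct, Finset.mul_sum,
    vecMulVec_apply]
  exact Fintype.sum_congr _ _ fun i => Fintype.sum_congr _ _ fun j => by ring

lemma integral_dotProduct_mulVec_self (hf : ∀ i, MemLp (fun x => f x i) 2 μ) (N : Matrix ι ι ℝ) :
    ∫ x, f x ⬝ᵥ N *ᵥ f x ∂μ = (N * crossMoment μ f f).trace := by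
  have h (x : Ω) : f x ⬝ᵥ N *ᵥ f x = ∑ i, ∑ j, N i j * (f x i * f x j) := by
    simp only [dotProduct, mulVec, Finset.mul_sum]
    exact Fintype.sum_congr _ _ fun i => Fintype.sum_congr _ _ fun j => by ring
  simp_rw [h, integral_sum_sum_mul hf, trace, diag, mul_apply]
  exact Fintype.sum_congr _ _ fun i => Fintype.sum_congr _ _ fun j => by
    rw [← transpose_apply (crossMoment μ f f) j i, transpose_crossMoment]

lemma posSemidef_crossMoment_self (hf : ∀ i, MemLp (fun x => f x i) 2 μ) :
    (crossMoment μ f f).PosSemidef := by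
  refine .of_dotProduct_mulVec_nonneg ?_ fun v => ?_
  · simpa [IsSymm] using transpose_crossMoment μ f f
  · rw [star_trivial, ← integral_dotProduct_mul_dotProduct hf]
    exact integral_nonneg fun x => mul_self_nonneg _

theorem integral_integral_dotProduct_mulVec_sq (hf : ∀ i, MemLp (fun x => f x i) 2 μ)
    (M : Matrix ι ι ℝ) :
    ∫ x, ∫ x', (f x ⬝ᵥ M *ᵥ f x') ^ 2 ∂μ ∂μ =
      (M * crossMoment μ f f * Mᵀ * crossMoment μ f f).trace := by
  have hinner (x : Ω) :
      ∫ x', (f x ⬝ᵥ M *ᵥ f x') ^ 2 ∂μ = f x ⬝ᵥ (M * crossMoment μ f f * Mᵀ) *ᵥ f x := by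
    simp_rw [sq, dotProduct_mulVec (f x) M, integral_dotProduct_mul_dotProduct hf]
    rw [← mulVec_mulVec, ← mulVec_mulVec, mulVec_transpose, dotProduct_mulVec (f x) M]
  simp_rw [hinner]
  exact integral_dotProduct_mulVec_self hf _

end CrossMoment

lemma memLp_apply_of_norm_le {Ω ι : Type*} [MeasurableSpace Ω] [Fintype ι] {μ : Measure Ω}
    [IsFiniteMeasure μ]
    {k : Ω → EuclideanSpace ℝ ι} (hk : Measurable k) {C : ℝ} (hC : ∀ x, ‖k x‖ ≤ C)
    (q : ℝ≥0∞) (i : ι) : MemLp (fun x => k x i) q μ :=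
  MemLp.of_bound ((EuclideanSpace.proj i).continuous.measurable.comp hk).aestronglyMeasurable C
    (ae_of_all _ fun x => (PiLp.norm_apply_le (k x) i).trans (hC x))

section Blocks

variable {m n R : Type*} [Fintype m] [Fintype n] [CommRing R]

lemma trace_fromBlocks (A : Matrix m m R) (B : Matrix m n R) (C : Matrix n m R)
    (D : Matrix n n R) : (fromBlocks A B C D).trace = A.trace + D.trace := by
  simp only [trace, diag, Fintype.sum_sum_type, fromBlocks_apply₁₁, fromBlocks_apply₂₂]

lemma sumElim_dotProduct_fromBlocks_zero_mulVec_sumElim (a a' : m → R) (b b' : n → R)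
    (A : Matrix m m R) (D : Matrix n n R) :
    Sum.elim a b ⬝ᵥ fromBlocks A 0 0 D *ᵥ Sum.elim a' b' = a ⬝ᵥ A *ᵥ a' + b ⬝ᵥ D *ᵥ b' := by
  simp [fromBlocks_mulVec, sumElim_dotProduct_sumElim]

lemma trace_fromBlocks_diag_mul_mul_transpose_mul (A S : Matrix m m R) (B T : Matrix n n R)
    (C : Matrix m n R) :
    (fromBlocks A 0 0 (-B) * fromBlocks S C Cᵀ T * (fromBlocks A 0 0 (-B))ᵀ *
        fromBlocks S C Cᵀ T).trace =
      (A * S * Aᵀ * S).trace + (B * T * Bᵀ * T).trace - 2 * (A * C * Bᵀ * Cᵀ).trace := by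
  have hcross : (B * Cᵀ * Aᵀ * C).trace = (A * C * Bᵀ * Cᵀ).trace := by
    rw [← trace_transpose]
    simp only [transpose_mul, transpose_transpose, Matrix.mul_assoc]
    rw [trace_mul_comm]
    simp only [Matrix.mul_assoc]
  simp only [fromBlocks_transpose, fromBlocks_multiply, trace_fromBlocks, transpose_zero,
    transpose_neg, Matrix.mul_zero, Matrix.zero_mul, add_zero, zero_add, Matrix.neg_mul,
    Matrix.mul_neg, neg_neg, trace_add, trace_neg]
  rw [hcross]
  ring

end Blocks

theorem stmt_2 {Ω : Type*} [MeasurableSpace Ω] (μ : Measure Ω) [IsProbabilityMeasure μ]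
    (lam : ℝ) (hlam : 0 < lam)
    {m p : ℕ} (k : Ω → EuclideanSpace ℝ (Fin m)) (l : Ω → EuclideanSpace ℝ (Fin p))
    (hk : Measurable k) (hl : Measurable l)
    (C : ℝ) (hkC : ∀ x, ‖k x‖ ≤ C) (hlC : ∀ x, ‖l x‖ ≤ C)
    (S1 : Matrix (Fin m) (Fin m) ℝ) (hS1 : ∀ i j, S1 i j = ∫ x, k x i * k x j ∂μ)
    (S2 : Matrix (Fin p) (Fin p) ℝ) (hS2 : ∀ i j, S2 i j = ∫ x, l x i * l x j ∂μ)
    (C12 : Matrix (Fin m) (Fin p) ℝ) (hC12 : ∀ i j, C12 i j = ∫ x, k x i * l x j ∂μ) :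
    IsUnit (S1 + lam • 1) ∧ IsUnit (S2 + lam • 1) ∧
    (∫ x, ∫ x', ((fun i => k x i) ⬝ᵥ (S1 + lam • 1)⁻¹.mulVec (fun i => k x' i)
        - (fun i => l x i) ⬝ᵥ (S2 + lam • 1)⁻¹.mulVec (fun i => l x' i)) ^ 2 ∂μ ∂μ) =
      ((S1 + lam • 1)⁻¹ * S1 * (S1 + lam • 1)⁻¹ * S1).trace
        + ((S2 + lam • 1)⁻¹ * S2 * (S2 + lam • 1)⁻¹ * S2).trace
        - 2 * ((S1 + lam • 1)⁻¹ * C12 * (S2 + lam • 1)⁻¹ * C12ᵀ).trace := by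
  set kf : Ω → Fin m → ℝ := fun x i => k x i
  set lf : Ω → Fin p → ℝ := fun x j => l x j
  obtain rfl : S1 = crossMoment μ kf kf := Matrix.ext hS1
  obtain rfl : S2 = crossMoment μ lf lf := Matrix.ext hS2
  obtain rfl : C12 = crossMoment μ kf lf := Matrix.ext hC12
  have hkL2 : ∀ i, MemLp (fun x => kf x i) 2 μ := memLp_apply_of_norm_le hk hkC 2
  have hlL2 : ∀ j, MemLp (fun x => lf x j) 2 μ := memLp_apply_of_norm_le hl hlC 2
  have hreg {n : ℕ} : (lam • 1 : Matrix (Fin n) (Fin n) ℝ).PosDef := PosDef.one.smul hlam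
  have hA := PosDef.posSemidef_add (posSemidef_crossMoment_self hkL2) hreg
  have hB := PosDef.posSemidef_add (posSemidef_crossMoment_self hlL2) hreg
  refine ⟨hA.isUnit, hB.isUnit, ?_⟩
  set A := (crossMoment μ kf kf + lam • 1)⁻¹
  set B := (crossMoment μ lf lf + lam • 1)⁻¹
  have hAt : Aᵀ = A := (isHermitian_iff_isSymm.mp hA.inv.isHermitian).eq
  have hBt : Bᵀ = B := (isHermitian_iff_isSymm.mp hB.inv.isHermitian).eq
  set w : Ω → Fin m ⊕ Fin p → ℝ := fun x => Sum.elim (kf x) (lf x)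
  have hwL2 : ∀ s, MemLp (fun x => w x s) 2 μ := by
    rintro (i | j)
    exacts [hkL2 i, hlL2 j]
  have hdiff (x x' : Ω) :
      kf x ⬝ᵥ A *ᵥ kf x' - lf x ⬝ᵥ B *ᵥ lf x' = w x ⬝ᵥ fromBlocks A 0 0 (-B) *ᵥ w x' := by
    rw [sumElim_dotProduct_fromBlocks_zero_mulVec_sumElim, neg_mulVec, dotProduct_neg,
      sub_eq_add_neg]
  calc
    _ = ∫ x, ∫ x', (w x ⬝ᵥ fromBlocks A 0 0 (-B) *ᵥ w x') ^ 2 ∂μ ∂μ := by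
      simp only [← hdiff]; rfl
    _ = _ := by
      rw [integral_integral_dotProduct_mulVec_sq hwL2, crossMoment_sumElim,
        ← transpose_crossMoment μ kf lf, trace_fromBlocks_diag_mul_mul_transpose_mul, hAt, hBt]
end

section
/- Let (Ω, μ) be a probability space, λ > 0, and let k : Ω → ℝ^m and l : Ω → ℝ^p be bounded measurable feature maps. Let Σ_k = ∫ k k ᵀ dμ and Σ_l = ∫ l lᵀ dμ. Then ∫∫ ( k(x)ᵀ(Σ_k+λI)⁻¹k(x') − l(x)ᵀ(Σ_l+λI)⁻¹l(x') )² dμ(x) dμ(x') = 0 if and only if ⟨k(x), k(x')⟩ = ⟨l(x), l(x')⟩ for μ⊗μ-almost every (x, x'). That is, the UKP distance between the two representations vanishes if and only if the associated kernels K_φ(x,x') = ⟨k(x),k(x')⟩ and K_ψ(x,x') = ⟨l(x),l(x')⟩ agree almost everywhere. -/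
/-!
Stack the feature maps into `φ = (k, l)` and factor its second-moment matrix as `G = BᵀB`. For any
matrix `M`, the kernel `φ(x)ᵀ M φ(x')` has squared `L²(μ ⊗ μ)` norm `tr(MᵀGMG) = ‖B M Bᵀ‖²`, so it
vanishes a.e. iff `B M Bᵀ = 0`. With `B = [U V]` we have `Σ_k = UᵀU` and `Σ_l = VᵀV`. The
regularized difference is the kernel of `M = diag((Σ_k + λ)⁻¹, -(Σ_l + λ)⁻¹)`, for which
`B M Bᵀ = U(UᵀU + λ)⁻¹Uᵀ - V(VᵀV + λ)⁻¹Vᵀ = λ((VVᵀ + λ)⁻¹ - (UUᵀ + λ)⁻¹)`. This vanishes iff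
`UUᵀ = VVᵀ`, i.e. iff `B diag(1, -1) Bᵀ = 0`, which says that the plain kernels agree a.e.
-/

open MeasureTheory Matrix
open scoped RealInnerProductSpace

section Regularized

variable {r a b : Type*} [Fintype r] [Fintype a] [DecidableEq a] {lam : ℝ}

theorem isUnit_det_transpose_mul_self_add_smul_one (hlam : 0 < lam) (U : Matrix r a ℝ) :
    IsUnit (Uᵀ * U + lam • 1).det := by
  have hpsd : (Uᵀ * U).PosSemidef := by
    rw [← conjTranspose_eq_transpose_of_trivial]; exact posSemidef_conjTranspose_mul_self U
  have hlam1 : (lam • 1 : Matrix a a ℝ).PosDef := by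
    simpa [smul_one_eq_diagonal] using posDef_diagonal_iff.mpr fun _ => hlam
  exact (hlam1.posSemidef_add hpsd).det_pos.ne'.isUnit

variable [DecidableEq r]

theorem mul_inv_transpose_mul_self_add_smul_one_mul_transpose (hlam : 0 < lam)
    (U : Matrix r a ℝ) :
    U * (Uᵀ * U + lam • 1)⁻¹ * Uᵀ = 1 - lam • (U * Uᵀ + lam • 1)⁻¹ := by
  set S := Uᵀ * U + lam • 1
  set T := U * Uᵀ + lam • 1
  have hS := isUnit_det_transpose_mul_self_add_smul_one hlam U
  have hT : IsUnit T.det := by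
    simpa using isUnit_det_transpose_mul_self_add_smul_one hlam Uᵀ
  have hTU : T * U = U * S := by
    simp only [T, S, Matrix.add_mul, Matrix.mul_add, Matrix.smul_mul, Matrix.mul_smul,
      Matrix.one_mul, Matrix.mul_one, Matrix.mul_assoc]
  have push : U * S⁻¹ = T⁻¹ * U := by
    rw [← nonsing_inv_mul_cancel_left (A := T) (U * S⁻¹) hT, ← Matrix.mul_assoc T U, hTU,
      mul_nonsing_inv_cancel_right (A := S) U hS]
  calc U * S⁻¹ * Uᵀ = T⁻¹ * (T - lam • 1) := by
        rw [push, Matrix.mul_assoc, add_sub_cancel_right]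
    _ = 1 - lam • T⁻¹ := by
        rw [Matrix.mul_sub, nonsing_inv_mul _ hT, Matrix.mul_smul, Matrix.mul_one]

theorem mul_inv_transpose_mul_self_add_smul_one_mul_transpose_eq_iff [Fintype b] [DecidableEq b]
    (hlam : 0 < lam) (U : Matrix r a ℝ) (V : Matrix r b ℝ) :
    U * (Uᵀ * U + lam • 1)⁻¹ * Uᵀ = V * (Vᵀ * V + lam • 1)⁻¹ * Vᵀ ↔ U * Uᵀ = V * Vᵀ := by
  rw [mul_inv_transpose_mul_self_add_smul_one_mul_transpose hlam,
    mul_inv_transpose_mul_self_add_smul_one_mul_transpose hlam, sub_right_inj,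
    smul_right_inj hlam.ne']
  refine ⟨fun h => ?_, fun h => by rw [h]⟩
  simpa using inv_inj h (by simpa using isUnit_det_transpose_mul_self_add_smul_one hlam Uᵀ)

end Regularized

section Blocks

variable {r a b : Type*} [Fintype a] [Fintype b]

theorem fromCols_mul_fromBlocks_neg_mul_transpose (U : Matrix r a ℝ) (V : Matrix r b ℝ)
    (A : Matrix a a ℝ) (D : Matrix b b ℝ) :
    fromCols U V * fromBlocks A 0 0 (-D) * (fromCols U V)ᵀ = U * A * Uᵀ - V * D * Vᵀ := by
  simp [transpose_fromCols, fromCols_mul_fromBlocks, fromCols_mul_fromRows, sub_eq_add_neg]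

theorem sumElim_dotProduct_fromBlocks_neg_mulVec (A : Matrix a a ℝ) (D : Matrix b b ℝ)
    (v w : a → ℝ) (v' w' : b → ℝ) :
    Sum.elim v v' ⬝ᵥ fromBlocks A 0 0 (-D) *ᵥ Sum.elim w w' = v ⬝ᵥ A *ᵥ w - v' ⬝ᵥ D *ᵥ w' := by
  simp [fromBlocks_mulVec, sumElim_dotProduct_sumElim, neg_mulVec, sub_eq_add_neg]

end Blocks

section SecondMoment

variable {Ω ι n : Type*} [MeasurableSpace Ω] {μ : Measure Ω}

theorem integral_sum_mul_sq [Fintype ι] (c : ι → ℝ) {f : ι → Ω → ℝ}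
    (hf : ∀ i j, Integrable (fun x => f i x * f j x) μ) :
    ∫ x, (∑ i, c i * f i x) ^ 2 ∂μ = ∑ i, ∑ j, c i * c j * ∫ x, f i x * f j x ∂μ := by
  have hexpand : ∀ x, (∑ i, c i * f i x) ^ 2 = ∑ i, ∑ j, c i * c j * (f i x * f j x) := by
    intro x
    rw [sq, Finset.sum_mul_sum]
    exact Finset.sum_congr rfl fun i _ => Finset.sum_congr rfl fun j _ => by ring
  simp_rw [hexpand]
  rw [integral_finsetSum _ fun i _ => integrable_finsetSum _ fun j _ => (hf i j).const_mul _]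
  refine Finset.sum_congr rfl fun i _ => ?_
  rw [integral_finsetSum _ fun j _ => (hf i j).const_mul _]
  simp_rw [integral_const_mul]

theorem integrable_sum_mul_sq [Fintype ι] (c : ι → ℝ) {f : ι → Ω → ℝ}
    (hf : ∀ i j, Integrable (fun x => f i x * f j x) μ) :
    Integrable (fun x => (∑ i, c i * f i x) ^ 2) μ := by
  simp_rw [sq, Finset.sum_mul_sum]
  exact integrable_finsetSum _ fun i _ => integrable_finsetSum _ fun j _ =>
    ((hf i j).const_mul (c i * c j)).congr (ae_of_all _ fun x => by ring)

noncomputable def secondMoment (μ : Measure Ω) (φ : Ω → n → ℝ) : Matrix n n ℝ :=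
  of fun i j => ∫ x, φ x i * φ x j ∂μ

variable {φ : Ω → n → ℝ}

theorem secondMoment_apply (i j : n) : secondMoment μ φ i j = ∫ x, φ x i * φ x j ∂μ := rfl

theorem secondMoment_comm (i j : n) : secondMoment μ φ i j = secondMoment μ φ j i := by
  simp only [secondMoment_apply, mul_comm]

theorem integrable_mul_of_norm_le [IsFiniteMeasure μ] (hφ : ∀ i, Measurable fun x => φ x i)
    {C : ℝ} (hC : ∀ x i, ‖φ x i‖ ≤ C) (i j : n) : Integrable (fun x => φ x i * φ x j) μ :=
  (Integrable.of_bound (hφ j).aestronglyMeasurable C (ae_of_all _ (hC · j))).bdd_mul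
    (hφ i).aestronglyMeasurable (ae_of_all _ (hC · i))

variable [Fintype n]

theorem secondMoment_posSemidef (hφ : ∀ i j, Integrable (fun x => φ x i * φ x j) μ) :
    (secondMoment μ φ).PosSemidef := by
  refine .of_dotProduct_mulVec_nonneg ?_ fun v => ?_
  · ext i j
    exact secondMoment_comm j i
  · have hquad : star v ⬝ᵥ secondMoment μ φ *ᵥ v = ∫ x, (∑ i, v i * φ x i) ^ 2 ∂μ := by
      rw [integral_sum_mul_sq v hφ]
      simp only [dotProduct, mulVec, secondMoment_apply, star_trivial, Finset.mul_sum]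
      exact Finset.sum_congr rfl fun i _ => Finset.sum_congr rfl fun j _ => by ring
    rw [hquad]
    exact integral_nonneg fun x => sq_nonneg _

open scoped MatrixOrder in
theorem exists_secondMoment_eq_transpose_mul_self
    (hφ : ∀ i j, Integrable (fun x => φ x i * φ x j) μ) :
    ∃ B : Matrix n n ℝ, secondMoment μ φ = Bᵀ * B := by
  classical
  obtain ⟨B, hB⟩ := CStarAlgebra.nonneg_iff_eq_star_mul_self.mp (secondMoment_posSemidef hφ).nonneg
  exact ⟨B, by rwa [star_eq_conjTranspose, conjTranspose_eq_transpose_of_trivial] at hB⟩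

theorem dotProduct_mulVec_eq_sum (M : Matrix n n ℝ) (v w : n → ℝ) :
    v ⬝ᵥ M *ᵥ w = ∑ ij : n × n, M ij.1 ij.2 * (v ij.1 * w ij.2) := by
  simp only [dotProduct, mulVec, Finset.mul_sum, Fintype.sum_prod_type]
  exact Finset.sum_congr rfl fun i _ => Finset.sum_congr rfl fun j _ => by ring

theorem integrable_dotProduct_mulVec_sq (hφ : ∀ i j, Integrable (fun x => φ x i * φ x j) μ)
    (M : Matrix n n ℝ) :
    Integrable (fun q : Ω × Ω => (φ q.1 ⬝ᵥ M *ᵥ φ q.2) ^ 2) (μ.prod μ) := by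
  simp_rw [dotProduct_mulVec_eq_sum]
  refine integrable_sum_mul_sq _ fun ij kl => ?_
  exact ((hφ ij.1 kl.1).mul_prod (hφ ij.2 kl.2)).congr (ae_of_all _ fun q => by dsimp; ring)

variable [SFinite μ]

theorem integral_dotProduct_mulVec_sq (hφ : ∀ i j, Integrable (fun x => φ x i * φ x j) μ)
    (M : Matrix n n ℝ) :
    ∫ q, (φ q.1 ⬝ᵥ M *ᵥ φ q.2) ^ 2 ∂(μ.prod μ)
      = trace (Mᵀ * secondMoment μ φ * M * secondMoment μ φ) := by
  have hprod : ∀ ij kl : n × n,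
      ∫ q : Ω × Ω, φ q.1 ij.1 * φ q.2 ij.2 * (φ q.1 kl.1 * φ q.2 kl.2) ∂(μ.prod μ)
        = secondMoment μ φ ij.1 kl.1 * secondMoment μ φ ij.2 kl.2 := by
    intro ij kl
    rw [secondMoment_apply, secondMoment_apply, ← integral_prod_mul]
    exact integral_congr_ae (ae_of_all _ fun q => by dsimp; ring)
  simp_rw [dotProduct_mulVec_eq_sum]
  rw [integral_sum_mul_sq _ fun ij kl =>
    ((hφ ij.1 kl.1).mul_prod (hφ ij.2 kl.2)).congr (ae_of_all _ fun q => by dsimp; ring)]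
  simp_rw [hprod]
  simp only [trace, diag, mul_apply, transpose_apply, Fintype.sum_prod_type, Finset.sum_mul]
  conv_rhs => enter [2, j, 2, l]; rw [Finset.sum_comm]
  conv_rhs => enter [2, j]; rw [Finset.sum_comm]
  conv_rhs => rw [Finset.sum_comm]
  conv_rhs => enter [2, i, 2, j]; rw [Finset.sum_comm]
  refine Finset.sum_congr rfl fun i _ => Finset.sum_congr rfl fun j _ =>
    Finset.sum_congr rfl fun k _ => Finset.sum_congr rfl fun l _ => ?_
  rw [secondMoment_comm l j]
  ring

theorem integral_dotProduct_mulVec_sq_eq_zero_iff {r : Type*} [Fintype r]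
    (hφ : ∀ i j, Integrable (fun x => φ x i * φ x j) μ) {B : Matrix r n ℝ}
    (hB : secondMoment μ φ = Bᵀ * B) (M : Matrix n n ℝ) :
    ∫ q, (φ q.1 ⬝ᵥ M *ᵥ φ q.2) ^ 2 ∂(μ.prod μ) = 0 ↔ B * M * Bᵀ = 0 := by
  have hfrob : trace (Mᵀ * (Bᵀ * B) * M * (Bᵀ * B)) = trace ((B * M * Bᵀ)ᵀ * (B * M * Bᵀ)) := by
    simp only [transpose_mul, transpose_transpose, ← Matrix.mul_assoc]
    rw [trace_mul_comm]
    simp only [Matrix.mul_assoc]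
  rw [integral_dotProduct_mulVec_sq hφ, hB, hfrob, ← conjTranspose_eq_transpose_of_trivial,
    trace_conjTranspose_mul_self_eq_zero_iff]

theorem integral_integral_dotProduct_mulVec_sq_eq_zero_iff {r : Type*} [Fintype r]
    (hφ : ∀ i j, Integrable (fun x => φ x i * φ x j) μ) {B : Matrix r n ℝ}
    (hB : secondMoment μ φ = Bᵀ * B) (M : Matrix n n ℝ) :
    ∫ x, ∫ x', (φ x ⬝ᵥ M *ᵥ φ x') ^ 2 ∂μ ∂μ = 0 ↔ B * M * Bᵀ = 0 := by
  rw [integral_integral (f := fun x x' => (φ x ⬝ᵥ M *ᵥ φ x') ^ 2)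
    (integrable_dotProduct_mulVec_sq hφ M), integral_dotProduct_mulVec_sq_eq_zero_iff hφ hB]

theorem ae_dotProduct_mulVec_eq_zero_iff {r : Type*} [Fintype r]
    (hφ : ∀ i j, Integrable (fun x => φ x i * φ x j) μ) {B : Matrix r n ℝ}
    (hB : secondMoment μ φ = Bᵀ * B) (M : Matrix n n ℝ) :
    (∀ᵐ q ∂(μ.prod μ), φ q.1 ⬝ᵥ M *ᵥ φ q.2 = 0) ↔ B * M * Bᵀ = 0 := by
  rw [← integral_dotProduct_mulVec_sq_eq_zero_iff hφ hB,
    integral_eq_zero_iff_of_nonneg (fun q => sq_nonneg _) (integrable_dotProduct_mulVec_sq hφ M)]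
  simp only [Filter.EventuallyEq, Pi.zero_apply, pow_eq_zero_iff two_ne_zero]

end SecondMoment

theorem integral_integral_regularized_kernel_sub_sq_eq_zero_iff {Ω a b : Type*}
    [MeasurableSpace Ω] {μ : Measure Ω} [SFinite μ] [Fintype a] [Fintype b] [DecidableEq a]
    [DecidableEq b] {lam : ℝ} (hlam : 0 < lam) {f : Ω → a → ℝ} {g : Ω → b → ℝ}
    (hfg : ∀ i j, Integrable (fun x => Sum.elim (f x) (g x) i * Sum.elim (f x) (g x) j) μ) :
    ∫ x, ∫ x', (f x ⬝ᵥ (secondMoment μ f + lam • 1)⁻¹ *ᵥ f x'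
        - g x ⬝ᵥ (secondMoment μ g + lam • 1)⁻¹ *ᵥ g x') ^ 2 ∂μ ∂μ = 0 ↔
      ∀ᵐ q ∂(μ.prod μ), f q.1 ⬝ᵥ f q.2 = g q.1 ⬝ᵥ g q.2 := by
  obtain ⟨B, hB⟩ := exists_secondMoment_eq_transpose_mul_self hfg
  obtain ⟨U, V, rfl⟩ : ∃ U V, B = fromCols U V := ⟨_, _, (fromCols_toCols B).symm⟩
  have hU : secondMoment μ f = Uᵀ * U := by
    ext i j
    simpa [transpose_fromCols, fromRows_mul_fromCols, secondMoment_apply]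
      using congr_fun₂ hB (.inl i) (.inl j)
  have hV : secondMoment μ g = Vᵀ * V := by
    ext i j
    simpa [transpose_fromCols, fromRows_mul_fromCols, secondMoment_apply]
      using congr_fun₂ hB (.inr i) (.inr j)
  have hreg : ∀ x x', f x ⬝ᵥ (secondMoment μ f + lam • 1)⁻¹ *ᵥ f x'
      - g x ⬝ᵥ (secondMoment μ g + lam • 1)⁻¹ *ᵥ g x'
      = Sum.elim (f x) (g x) ⬝ᵥ fromBlocks (secondMoment μ f + lam • 1)⁻¹ 0 0
          (-(secondMoment μ g + lam • 1)⁻¹) *ᵥ Sum.elim (f x') (g x') := fun x x' =>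
    (sumElim_dotProduct_fromBlocks_neg_mulVec _ _ _ _ _ _).symm
  have hker : ∀ q : Ω × Ω, f q.1 ⬝ᵥ f q.2 = g q.1 ⬝ᵥ g q.2 ↔
      Sum.elim (f q.1) (g q.1) ⬝ᵥ fromBlocks 1 0 0 (-1) *ᵥ Sum.elim (f q.2) (g q.2) = 0 :=
    fun q => by rw [sumElim_dotProduct_fromBlocks_neg_mulVec, one_mulVec, one_mulVec, sub_eq_zero]
  simp only [hreg, hker]
  rw [integral_integral_dotProduct_mulVec_sq_eq_zero_iff hfg hB,
    ae_dotProduct_mulVec_eq_zero_iff hfg hB, fromCols_mul_fromBlocks_neg_mul_transpose,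
    fromCols_mul_fromBlocks_neg_mul_transpose, hU, hV, Matrix.mul_one, Matrix.mul_one, sub_eq_zero,
    sub_eq_zero, mul_inv_transpose_mul_self_add_smul_one_mul_transpose_eq_iff hlam]

theorem stmt_4 {Ω : Type*} [MeasurableSpace Ω] (μ : Measure Ω) [IsProbabilityMeasure μ]
    (lam : ℝ) (hlam : 0 < lam)
    {m p : ℕ} (k : Ω → EuclideanSpace ℝ (Fin m)) (l : Ω → EuclideanSpace ℝ (Fin p))
    (hk : Measurable k) (hl : Measurable l)
    (hkbd : ∃ C, ∀ x, ‖k x‖ ≤ C) (hlbd : ∃ C, ∀ x, ‖l x‖ ≤ C)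
    (Sk : Matrix (Fin m) (Fin m) ℝ) (hSk : ∀ i j, Sk i j = ∫ x, k x i * k x j ∂μ)
    (Sl : Matrix (Fin p) (Fin p) ℝ) (hSl : ∀ i j, Sl i j = ∫ x, l x i * l x j ∂μ) :
    (∫ x, ∫ x', ((fun i => k x i) ⬝ᵥ (Sk + lam • 1)⁻¹.mulVec (fun i => k x' i)
        - (fun i => l x i) ⬝ᵥ (Sl + lam • 1)⁻¹.mulVec (fun i => l x' i)) ^ 2 ∂μ ∂μ) = 0 ↔
      ∀ᵐ q ∂(μ.prod μ), ⟪k q.1, k q.2⟫ = ⟪l q.1, l q.2⟫ := by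
  obtain ⟨Ck, hCk⟩ := hkbd
  obtain ⟨Cl, hCl⟩ := hlbd
  have hmeas : ∀ i, Measurable fun x => Sum.elim (k x).ofLp (l x).ofLp i := by
    rintro (i | i)
    · exact (measurable_pi_apply i).comp ((WithLp.measurable_ofLp 2 _).comp hk)
    · exact (measurable_pi_apply i).comp ((WithLp.measurable_ofLp 2 _).comp hl)
  have hbd : ∀ x i, ‖Sum.elim (k x).ofLp (l x).ofLp i‖ ≤ max Ck Cl := by
    rintro x (i | i)
    · exact (PiLp.norm_apply_le (k x) i).trans ((hCk x).trans (le_max_left _ _))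
    · exact (PiLp.norm_apply_le (l x) i).trans ((hCl x).trans (le_max_right _ _))
  have hinner : ∀ {d : ℕ} (x y : EuclideanSpace ℝ (Fin d)), ⟪x, y⟫ = x.ofLp ⬝ᵥ y.ofLp :=
    fun x y => by rw [EuclideanSpace.inner_eq_star_dotProduct, star_trivial, dotProduct_comm]
  obtain rfl : Sk = secondMoment μ fun x => (k x).ofLp := Matrix.ext hSk
  obtain rfl : Sl = secondMoment μ fun x => (l x).ofLp := Matrix.ext hSl
  simp only [hinner]
  exact integral_integral_regularized_kernel_sub_sq_eq_zero_iff hlam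
    (integrable_mul_of_norm_le hmeas hbd)
end

section
/- Let n ≥ 1, λ > 0, and let k_1, …, k_n ∈ ℝ^m. Define the empirical covariance matrix Σ̂ = (1/n) ∑_{i=1}^n k_i k_iᵀ (an m×m matrix) and the Gram matrix G with entries G_{ij} = ⟨k_i, k_j⟩ (an n×n matrix). Then Σ̂ + λI_m and G + nλI_n are invertible and Tr( (Σ̂ + λI)⁻¹ Σ̂ (Σ̂ + λI)⁻¹ Σ̂ ) = Tr( G (G + nλI)⁻¹ G (G + nλI)⁻¹ ). -/
open Matrix
open scoped RealInnerProductSpace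

theorem stmt_10 {n m : ℕ} (hn : 1 ≤ n) (lam : ℝ) (hlam : 0 < lam)
    (k : Fin n → EuclideanSpace ℝ (Fin m))
    (Shat : Matrix (Fin m) (Fin m) ℝ)
    (hShat : Shat = (n : ℝ)⁻¹ • ∑ i, vecMulVec (fun a => k i a) (fun a => k i a))
    (G : Matrix (Fin n) (Fin n) ℝ) (hG : ∀ i j, G i j = ⟪k i, k j⟫) :
    IsUnit (Shat + lam • 1) ∧ IsUnit (G + (n * lam) • 1) ∧
    ((Shat + lam • 1)⁻¹ * Shat * (Shat + lam • 1)⁻¹ * Shat).trace =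
      (G * (G + (n * lam) • 1)⁻¹ * G * (G + (n * lam) • 1)⁻¹).trace := by
  have hn0 : (0:ℝ) < (n:ℝ) := by exact_mod_cast hn.trans_lt' (by norm_num)
  have hnne : (n:ℝ) ≠ 0 := hn0.ne'
  set c : ℝ := (n:ℝ) * lam with hc
  have hcpos : 0 < c := mul_pos hn0 hlam
  set B : Matrix (Fin m) (Fin n) ℝ := Matrix.of fun a i => k i a with hBdef
  have hP : Shat = (n:ℝ)⁻¹ • (B * Bᵀ) := by
    rw [hShat]
    congr 1
    ext a b
    simp [Matrix.mul_apply, Matrix.vecMulVec_apply, Matrix.sum_apply, hBdef]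
  have hGm : G = Bᵀ * B := by
    ext i j
    rw [hG]
    simp [Matrix.mul_apply, hBdef, PiLp.inner_apply, RCLike.inner_apply, mul_comm]
  set M : Matrix (Fin m) (Fin m) ℝ := B * Bᵀ + c • 1 with hM
  set N : Matrix (Fin n) (Fin n) ℝ := Bᵀ * B + c • 1 with hN
  have hsm1 : ∀ (p : ℕ), (c • (1 : Matrix (Fin p) (Fin p) ℝ)).PosDef := by
    intro p
    rw [show c • (1 : Matrix (Fin p) (Fin p) ℝ) = Matrix.diagonal (fun _ => c) by
      ext i j; by_cases h : i = j <;> simp [Matrix.one_apply, Matrix.diagonal, h]]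
    exact Matrix.posDef_diagonal_iff.mpr fun _ => hcpos
  have hMpd : M.PosDef := by
    have h1 : (B * Bᵀ).PosSemidef := by
      have := Matrix.posSemidef_self_mul_conjTranspose B
      simpa using this
    exact Matrix.PosDef.posSemidef_add h1 (hsm1 m)
  have hNpd : N.PosDef := by
    have h1 : (Bᵀ * B).PosSemidef := by
      have := Matrix.posSemidef_conjTranspose_mul_self B
      simpa using this
    exact Matrix.PosDef.posSemidef_add h1 (hsm1 n)
  have hMinv : M * M⁻¹ = 1 := Matrix.mul_nonsing_inv _ hMpd.det_pos.ne'.isUnit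
  have hMinv' : M⁻¹ * M = 1 := Matrix.nonsing_inv_mul _ hMpd.det_pos.ne'.isUnit
  have hNinv : N * N⁻¹ = 1 := Matrix.mul_nonsing_inv _ hNpd.det_pos.ne'.isUnit
  have hNinv' : N⁻¹ * N = 1 := Matrix.nonsing_inv_mul _ hNpd.det_pos.ne'.isUnit
  -- Shat + lam • 1 = (1/n) • M
  have hSM : Shat + lam • 1 = (n:ℝ)⁻¹ • M := by
    rw [hP, hM, smul_add, smul_smul]
    congr 2
    rw [hc]
    field_simp
  have hGN : G + c • 1 = N := by rw [hGm, hN]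
  have hSMunit : IsUnit (Shat + lam • 1) := by
    rw [hSM]
    have : ((n:ℝ)⁻¹ • M).det = ((n:ℝ)⁻¹) ^ m * M.det := by
      simp [Matrix.det_smul]
    rw [Matrix.isUnit_iff_isUnit_det, this]
    exact (isUnit_iff_ne_zero.mpr (by positivity)).mul hMpd.det_pos.ne'.isUnit
  have hGNunit : IsUnit (G + c • 1) := by rw [hGN]; exact hNpd.isUnit
  refine ⟨hSMunit, hGNunit, ?_⟩
  -- inverse of the scaled matrix
  have hSinv : (Shat + lam • 1)⁻¹ = (n:ℝ) • M⁻¹ := by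
    rw [hSM]
    apply Matrix.inv_eq_right_inv
    rw [Matrix.smul_mul, Matrix.mul_smul, smul_smul, hMinv, inv_mul_cancel₀ hnne, one_smul]
  have hkey : (Shat + lam • 1)⁻¹ * Shat = M⁻¹ * (B * Bᵀ) := by
    rw [hSinv, hP, Matrix.smul_mul, Matrix.mul_smul, smul_smul, mul_inv_cancel₀ hnne, one_smul]
  -- push-through identity
  have hpush : Bᵀ * M⁻¹ = N⁻¹ * Bᵀ := by
    have h1 : Bᵀ * M = N * Bᵀ := by
      rw [hM, hN, Matrix.mul_add, Matrix.add_mul]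
      simp [Matrix.mul_smul, Matrix.smul_mul, Matrix.mul_assoc]
    calc Bᵀ * M⁻¹ = N⁻¹ * (N * (Bᵀ * M⁻¹)) := by rw [← Matrix.mul_assoc, hNinv', Matrix.one_mul]
      _ = N⁻¹ * (Bᵀ * M * M⁻¹) := by rw [h1, Matrix.mul_assoc]
      _ = N⁻¹ * Bᵀ := by rw [Matrix.mul_assoc, hMinv, Matrix.mul_one]
  have hpush2 : M⁻¹ * B = B * N⁻¹ := by
    have h1 : M * B = B * N := by
      rw [hM, hN, Matrix.add_mul, Matrix.mul_add]
      simp [Matrix.mul_smul, Matrix.smul_mul, Matrix.mul_assoc]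
    calc M⁻¹ * B = M⁻¹ * (B * N) * N⁻¹ := by
          rw [Matrix.mul_assoc, Matrix.mul_assoc, hNinv, Matrix.mul_one]
      _ = M⁻¹ * (M * B) * N⁻¹ := by rw [h1]
      _ = B * N⁻¹ := by rw [← Matrix.mul_assoc, hMinv', Matrix.one_mul]
  rw [Matrix.mul_assoc, hkey, ← Matrix.mul_assoc]
  rw [hGN, hGm]
  calc (M⁻¹ * (B * Bᵀ) * M⁻¹ * (B * Bᵀ)).trace
      = ((M⁻¹ * B * (Bᵀ * M⁻¹) * B) * Bᵀ).trace := by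
        congr 1; simp only [Matrix.mul_assoc]
    _ = (Bᵀ * (M⁻¹ * B * (Bᵀ * M⁻¹) * B)).trace := Matrix.trace_mul_comm _ _
    _ = ((Bᵀ * M⁻¹) * B * ((Bᵀ * M⁻¹) * B)).trace := by
        congr 1; simp only [Matrix.mul_assoc]
    _ = ((N⁻¹ * Bᵀ) * B * ((N⁻¹ * Bᵀ) * B)).trace := by rw [hpush]
    _ = ((N⁻¹ * (Bᵀ * B)) * (N⁻¹ * (Bᵀ * B))).trace := by
        congr 1; simp only [Matrix.mul_assoc]
    _ = (N⁻¹ * ((Bᵀ * B) * (N⁻¹ * (Bᵀ * B)))).trace := by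
        congr 1; simp only [Matrix.mul_assoc]
    _ = (((Bᵀ * B) * (N⁻¹ * (Bᵀ * B))) * N⁻¹).trace := Matrix.trace_mul_comm _ _
    _ = (Bᵀ * B * N⁻¹ * (Bᵀ * B) * N⁻¹).trace := by
        congr 1; simp only [Matrix.mul_assoc]
end

section
/- Let n ≥ 1, λ > 0, let k_1, …, k_n ∈ ℝ^m and l_1, …, l_n ∈ ℝ^p. Define Σ̂₁ = (1/n) ∑_i k_i k_iᵀ, Σ̂₂ = (1/n) ∑_i l_i l_iᵀ, the cross-covariance Σ̂₁₂ = (1/n) ∑_i k_i l_iᵀ (an m×p matrix), and the Gram matrices G, L with G_{ij} = ⟨k_i, k_j⟩ and L_{ij} = ⟨l_i, l_j⟩. Then Tr( (Σ̂₁ + λI)⁻¹ Σ̂₁₂ (Σ̂₂ + λI)⁻¹ Σ̂₁₂ᵀ ) = Tr( G (G + nλI)⁻¹ L (L + nλI)⁻¹ ). -/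
/-!
With the data matrices `X`, `Y` whose rows are the `k i`, `l i`, the covariances are
`n⁻¹ XᵀX`, `n⁻¹ YᵀY`, `n⁻¹ XᵀY` and the Gram matrices are `XXᵀ`, `YYᵀ`. After the factors of `n`
cancel, the push-through identity `(XᵀX + c)⁻¹ Xᵀ = Xᵀ (XXᵀ + c)⁻¹` (with `c = nλ`) moves each
resolvent from feature space to sample space, and cyclicity of the trace finishes the proof.
-/

open Matrix
open scoped RealInnerProductSpace

namespace Matrix

variable {ι m n : Type*}

theorem sum_vecMulVec_eq_transpose_mul [Fintype ι] {R : Type*} [NonUnitalNonAssocSemiring R]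
    (X : Matrix ι m R) (Y : Matrix ι n R) : ∑ i, vecMulVec (X i) (Y i) = Xᵀ * Y := by
  ext a b
  simp only [Matrix.sum_apply, vecMulVec_apply, mul_apply, transpose_apply]

theorem gram_eq_mul_transpose [Fintype m] (v : ι → EuclideanSpace ℝ m) :
    gram ℝ v = (of fun i a => v i a) * (of fun i a => v i a)ᵀ := by
  ext i j
  simp [mul_apply, PiLp.inner_apply, mul_comm]

theorem isUnit_det_transpose_mul_add_smul_one [Fintype m] [Fintype n] [DecidableEq n]
    (A : Matrix m n ℝ) {c : ℝ} (hc : 0 < c) : IsUnit (Aᵀ * A + c • 1).det := by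
  have hpsd : (Aᵀ * A).PosSemidef := by
    rw [← conjTranspose_eq_transpose_of_trivial]
    exact posSemidef_conjTranspose_mul_self A
  exact (PosDef.posSemidef_add hpsd (PosDef.one.smul hc)).det_pos.ne'.isUnit

variable [Fintype m] [Fintype n] [DecidableEq m] [DecidableEq n]

theorem inv_mul_add_smul_one_mul_eq_mul_inv {R : Type*} [CommRing R]
    (A : Matrix m n R) (B : Matrix n m R) {c : R}
    (hAB : IsUnit (A * B + c • 1).det) (hBA : IsUnit (B * A + c • 1).det) :
    (A * B + c • 1)⁻¹ * A = A * (B * A + c • 1)⁻¹ := by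
  have intertwine : (A * B + c • 1) * A = A * (B * A + c • 1) := by
    simp only [Matrix.add_mul, Matrix.mul_add, Matrix.mul_assoc, Matrix.smul_mul, Matrix.mul_smul,
      Matrix.one_mul, Matrix.mul_one]
  calc (A * B + c • 1)⁻¹ * A
      = (A * B + c • 1)⁻¹ * A * ((B * A + c • 1) * (B * A + c • 1)⁻¹) := by
        rw [mul_nonsing_inv _ hBA, Matrix.mul_one]
    _ = (A * B + c • 1)⁻¹ * ((A * B + c • 1) * A) * (B * A + c • 1)⁻¹ := by
        rw [intertwine]; simp only [Matrix.mul_assoc]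
    _ = A * (B * A + c • 1)⁻¹ := by
        rw [← Matrix.mul_assoc, nonsing_inv_mul _ hAB, Matrix.one_mul]

theorem inv_smul_add_smul_one {K : Type*} [Field K] (M : Matrix n n K) {t : K} (ht : t ≠ 0)
    (lam : K) (hM : IsUnit (M + (t * lam) • 1).det) :
    (t⁻¹ • M + lam • 1)⁻¹ = t • (M + (t * lam) • 1)⁻¹ := by
  have : Invertible t⁻¹ := invertibleOfNonzero (inv_ne_zero ht)
  have hscale : t⁻¹ • M + lam • 1 = t⁻¹ • (M + (t * lam) • 1) := by
    rw [smul_add, smul_smul, inv_mul_cancel_left₀ ht]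
  rw [hscale, inv_smul (A := M + (t * lam) • 1) t⁻¹ hM, invOf_eq_inv, inv_inv]

theorem inv_transpose_mul_add_smul_one_mul_transpose [Fintype ι] [DecidableEq ι]
    (Z : Matrix ι n ℝ) {c : ℝ} (hc : 0 < c) : (Zᵀ * Z + c • 1)⁻¹ * Zᵀ = Zᵀ * (Z * Zᵀ + c • 1)⁻¹ :=
  inv_mul_add_smul_one_mul_eq_mul_inv Zᵀ Z (isUnit_det_transpose_mul_add_smul_one Z hc)
    (by simpa only [transpose_transpose] using isUnit_det_transpose_mul_add_smul_one Zᵀ hc)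

variable {p : Type*} [Fintype p] [DecidableEq p] [Fintype ι] [DecidableEq ι]

theorem trace_covariance_resolvent_eq_gram_resolvent (X : Matrix ι m ℝ) (Y : Matrix ι p ℝ)
    {c : ℝ} (hc : 0 < c) :
    ((Xᵀ * X + c • 1)⁻¹ * (Xᵀ * Y) * (Yᵀ * Y + c • 1)⁻¹ * (Xᵀ * Y)ᵀ).trace =
      (X * Xᵀ * (X * Xᵀ + c • 1)⁻¹ * (Y * Yᵀ) * (Y * Yᵀ + c • 1)⁻¹).trace := by
  have pushX (W : Matrix ι p ℝ) :
      (Xᵀ * X + c • 1)⁻¹ * (Xᵀ * W) = Xᵀ * ((X * Xᵀ + c • 1)⁻¹ * W) := by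
    rw [← Matrix.mul_assoc, inv_transpose_mul_add_smul_one_mul_transpose X hc, Matrix.mul_assoc]
  have pushY (W : Matrix ι m ℝ) :
      (Yᵀ * Y + c • 1)⁻¹ * (Yᵀ * W) = Yᵀ * ((Y * Yᵀ + c • 1)⁻¹ * W) := by
    rw [← Matrix.mul_assoc, inv_transpose_mul_add_smul_one_mul_transpose Y hc, Matrix.mul_assoc]
  calc ((Xᵀ * X + c • 1)⁻¹ * (Xᵀ * Y) * (Yᵀ * Y + c • 1)⁻¹ * (Xᵀ * Y)ᵀ).trace
      = (Xᵀ * ((X * Xᵀ + c • 1)⁻¹ * (Y * Yᵀ) * (Y * Yᵀ + c • 1)⁻¹) * X).trace := by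
        simp only [transpose_mul, transpose_transpose, Matrix.mul_assoc, pushX, pushY]
    _ = (X * Xᵀ * (X * Xᵀ + c • 1)⁻¹ * (Y * Yᵀ) * (Y * Yᵀ + c • 1)⁻¹).trace := by
        rw [trace_mul_comm]
        simp only [Matrix.mul_assoc]

end Matrix

theorem stmt_11 {n m p : ℕ} (hn : 1 ≤ n) (lam : ℝ) (hlam : 0 < lam)
    (k : Fin n → EuclideanSpace ℝ (Fin m)) (l : Fin n → EuclideanSpace ℝ (Fin p))
    (S1 : Matrix (Fin m) (Fin m) ℝ)
    (hS1 : S1 = (n : ℝ)⁻¹ • ∑ i, vecMulVec (fun a => k i a) (fun a => k i a))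
    (S2 : Matrix (Fin p) (Fin p) ℝ)
    (hS2 : S2 = (n : ℝ)⁻¹ • ∑ i, vecMulVec (fun a => l i a) (fun a => l i a))
    (S12 : Matrix (Fin m) (Fin p) ℝ)
    (hS12 : S12 = (n : ℝ)⁻¹ • ∑ i, vecMulVec (fun a => k i a) (fun a => l i a))
    (G : Matrix (Fin n) (Fin n) ℝ) (hG : ∀ i j, G i j = ⟪k i, k j⟫)
    (L : Matrix (Fin n) (Fin n) ℝ) (hL : ∀ i j, L i j = ⟪l i, l j⟫) :
    ((S1 + lam • 1)⁻¹ * S12 * (S2 + lam • 1)⁻¹ * S12ᵀ).trace =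
      (G * (G + (n * lam) • 1)⁻¹ * L * (L + (n * lam) • 1)⁻¹).trace := by
  set X : Matrix (Fin n) (Fin m) ℝ := of fun i a => k i a
  set Y : Matrix (Fin n) (Fin p) ℝ := of fun i a => l i a
  have hn_pos : (0 : ℝ) < n := Nat.cast_pos.mpr hn
  have hnR : (n : ℝ) ≠ 0 := hn_pos.ne'
  have hc : 0 < (n : ℝ) * lam := mul_pos hn_pos hlam
  have hGX : G = X * Xᵀ := (Matrix.ext hG).trans (gram_eq_mul_transpose k)
  have hLY : L = Y * Yᵀ := (Matrix.ext hL).trans (gram_eq_mul_transpose l)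
  have hXX : ∑ i, vecMulVec (fun a => k i a) (fun a => k i a) = Xᵀ * X :=
    sum_vecMulVec_eq_transpose_mul X X
  have hYY : ∑ i, vecMulVec (fun a => l i a) (fun a => l i a) = Yᵀ * Y :=
    sum_vecMulVec_eq_transpose_mul Y Y
  have hXY : ∑ i, vecMulVec (fun a => k i a) (fun a => l i a) = Xᵀ * Y :=
    sum_vecMulVec_eq_transpose_mul X Y
  rw [hS1, hS2, hS12, hXX, hYY, hXY,
    inv_smul_add_smul_one _ hnR lam (isUnit_det_transpose_mul_add_smul_one X hc),
    inv_smul_add_smul_one _ hnR lam (isUnit_det_transpose_mul_add_smul_one Y hc)]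
  have hcancel : (n : ℝ)⁻¹ * ((n : ℝ) * ((n : ℝ)⁻¹ * (n : ℝ))) = 1 := by field_simp
  simp only [transpose_smul, Matrix.smul_mul, Matrix.mul_smul, smul_smul, hcancel, one_smul]
  rw [trace_covariance_resolvent_eq_gram_resolvent X Y hc, hGX, hLY]
end

section
/- Let n ≥ 1, λ > 0, and let K and L be real symmetric positive semidefinite n×n matrices with spectral decompositions K = ∑_i μ_i u_i u_iᵀ and L = ∑_j ν_j v_j v_jᵀ ((u_i), (v_j) orthonormal eigenbases). Then Tr(K(K+nλI)⁻¹K(K+nλI)⁻¹) + Tr(L(L+nλI)⁻¹L(L+nλI)⁻¹) − 2 Tr(K(K+nλI)⁻¹L(L+nλI)⁻¹) = ∑_{i=1}^n (μ_i/(μ_i+nλ))² + ∑_{j=1}^n (ν_j/(ν_j+nλ))² − 2 ∑_{i=1}^n ∑_{j=1}^n ( μ_i ν_j / ((μ_i+nλ)(ν_j+nλ)) ) ⟨u_i, v_j⟩², and this common value is nonnegative. -/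
/-! Writing `K = ∑ μᵢ uᵢuᵢᵀ`, the functional calculus in the orthonormal basis `(uᵢ)` gives
`K(K + nλI)⁻¹ = ∑ μᵢ/(μᵢ + nλ) uᵢuᵢᵀ`; the inverse exists because `μᵢ = uᵢᵀKuᵢ ≥ 0`. All three
traces then reduce to the rank-one traces `tr(uᵢuᵢᵀ vⱼvⱼᵀ) = ⟨uᵢ, vⱼ⟩²`. For the sign, the
expression is `tr((A - B)ᵀ(A - B)) ≥ 0` with `A = K(K + nλI)⁻¹` and `B = L(L + nλI)⁻¹` symmetric. -/

open Matrix
open scoped RealInnerProductSpace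

namespace Matrix

variable {ι κ m R : Type*} [Fintype ι] [Fintype κ]

def spectralSum [CommRing R] (w : ι → m → R) (x : ι → R) : Matrix m m R :=
  ∑ i, x i • vecMulVec (w i) (w i)

section CommRing

variable [CommRing R]

theorem isSymm_spectralSum (w : ι → m → R) (x : ι → R) : (spectralSum w x).IsSymm := by
  simp [IsSymm, spectralSum, transpose_sum]

theorem trace_spectralSum_mul_spectralSum [Fintype m] (w : ι → m → R) (z : κ → m → R)
    (x : ι → R) (y : κ → R) :
    (spectralSum w x * spectralSum z y).trace = ∑ i, ∑ j, x i * y j * (w i ⬝ᵥ z j) ^ 2 := by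
  simp only [spectralSum, Finset.sum_mul_sum, trace_sum, smul_mul_smul_comm,
    vecMulVec_mul_vecMulVec, trace_smul, trace_vecMulVec, dotProduct_smul, smul_eq_mul]
  refine Finset.sum_congr rfl fun i _ => Finset.sum_congr rfl fun j _ => ?_
  ring

variable [Fintype m] [DecidableEq ι] {w : ι → m → R}

theorem spectralSum_mul_spectralSum (hw : ∀ i j, w i ⬝ᵥ w j = if i = j then 1 else 0)
    (x y : ι → R) : spectralSum w x * spectralSum w y = spectralSum w (x * y) := by
  simp only [spectralSum, Finset.sum_mul_sum, smul_mul_smul_comm, vecMulVec_mul_vecMulVec,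
    vecMulVec_smul]
  simp [hw, Finset.sum_ite_eq]

theorem trace_spectralSum (hw : ∀ i j, w i ⬝ᵥ w j = if i = j then 1 else 0) (x : ι → R) :
    (spectralSum w x).trace = ∑ i, x i := by
  simp [spectralSum, trace_sum, hw]

theorem spectralSum_mulVec (hw : ∀ i j, w i ⬝ᵥ w j = if i = j then 1 else 0) (x : ι → R)
    (j : ι) : spectralSum w x *ᵥ w j = x j • w j := by
  simp [spectralSum, sum_mulVec, smul_mulVec, vecMulVec_mulVec, hw]

end CommRing

section Square

variable [Fintype m] [DecidableEq m] {w : m → m → R}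

theorem spectralSum_one [CommRing R] (hw : ∀ i j, w i ⬝ᵥ w j = if i = j then 1 else 0) :
    spectralSum w 1 = 1 := by
  have h : of w * (of w)ᵀ = 1 := by
    ext i j
    simpa [mul_apply, dotProduct, one_apply] using hw i j
  calc spectralSum w 1 = (of w)ᵀ * of w := by
        ext a b
        simp [spectralSum, mul_apply, sum_apply, vecMulVec_apply]
    _ = 1 := mul_eq_one_comm.mp h

theorem spectralSum_add_smul_one [CommRing R]
    (hw : ∀ i j, w i ⬝ᵥ w j = if i = j then 1 else 0) (x : m → R) (c : R) :
    spectralSum w x + c • 1 = spectralSum w (fun i => x i + c) := by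
  rw [← spectralSum_one hw]
  simp only [spectralSum, Finset.smul_sum, smul_smul, ← Finset.sum_add_distrib, ← add_smul,
    Pi.one_apply, mul_one]

theorem inv_spectralSum [Field R] (hw : ∀ i j, w i ⬝ᵥ w j = if i = j then 1 else 0)
    {x : m → R} (hx : ∀ i, x i ≠ 0) : (spectralSum w x)⁻¹ = spectralSum w x⁻¹ := by
  refine inv_eq_right_inv ?_
  rw [spectralSum_mul_spectralSum hw, ← spectralSum_one hw]
  congr
  ext i
  exact mul_inv_cancel₀ (hx i)

theorem spectralSum_mul_inv_add_smul_one [Field R]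
    (hw : ∀ i j, w i ⬝ᵥ w j = if i = j then 1 else 0) {x : m → R} {c : R}
    (hx : ∀ i, x i + c ≠ 0) :
    spectralSum w x * (spectralSum w x + c • 1)⁻¹ = spectralSum w (fun i => x i / (x i + c)) := by
  rw [spectralSum_add_smul_one hw, inv_spectralSum hw hx, spectralSum_mul_spectralSum hw]
  simp only [div_eq_mul_inv]
  rfl

end Square

section Real

variable [Fintype m]

theorem nonneg_of_posSemidef_spectralSum [DecidableEq ι] {w : ι → m → ℝ}
    (hw : ∀ i j, w i ⬝ᵥ w j = if i = j then 1 else 0) {x : ι → ℝ}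
    (hx : (spectralSum w x).PosSemidef) (i : ι) : 0 ≤ x i := by
  simpa [spectralSum_mulVec hw, hw] using hx.dotProduct_mulVec_nonneg (w i)

theorem two_mul_trace_mul_le {A B : Matrix m m ℝ} (hA : A.IsSymm) (hB : B.IsSymm) :
    2 * (A * B).trace ≤ (A * A).trace + (B * B).trace := by
  have h := (posSemidef_conjTranspose_mul_self (A - B)).trace_nonneg
  rw [conjTranspose_eq_transpose_of_trivial, transpose_sub, hA.eq, hB.eq] at h
  simp only [sub_mul, mul_sub, trace_sub, trace_mul_comm B A] at h
  linarith

end Real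

end Matrix

namespace EuclideanSpace

variable {ι m : Type*} [Fintype m]

theorem real_inner_eq_dotProduct (x y : EuclideanSpace ℝ m) : ⟪x, y⟫ = x.ofLp ⬝ᵥ y.ofLp := by
  rw [inner_eq_star_dotProduct, star_trivial, dotProduct_comm]

theorem dotProduct_ofLp_eq_ite [DecidableEq ι] {u : ι → EuclideanSpace ℝ m}
    (hu : Orthonormal ℝ u) (i j : ι) : (u i).ofLp ⬝ᵥ (u j).ofLp = if i = j then 1 else 0 := by
  rw [← real_inner_eq_dotProduct, orthonormal_iff_ite.mp hu i j]

end EuclideanSpace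

theorem stmt_15_general {n : ℕ} (lam : ℝ) (hlam : 0 < lam)
    (K L : Matrix (Fin n) (Fin n) ℝ) (hK : K.PosSemidef) (hL : L.PosSemidef)
    (μ ν : Fin n → ℝ) (u v : Fin n → EuclideanSpace ℝ (Fin n))
    (hu : Orthonormal ℝ u) (hv : Orthonormal ℝ v)
    (hKdec : K = ∑ i, μ i • vecMulVec (fun a => u i a) (fun a => u i a))
    (hLdec : L = ∑ j, ν j • vecMulVec (fun a => v j a) (fun a => v j a)) :
    (K * (K + (n * lam) • 1)⁻¹ * K * (K + (n * lam) • 1)⁻¹).trace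
        + (L * (L + (n * lam) • 1)⁻¹ * L * (L + (n * lam) • 1)⁻¹).trace
        - 2 * (K * (K + (n * lam) • 1)⁻¹ * L * (L + (n * lam) • 1)⁻¹).trace =
      (∑ i, (μ i / (μ i + n * lam)) ^ 2) + (∑ j, (ν j / (ν j + n * lam)) ^ 2)
        - 2 * ∑ i, ∑ j, (μ i * ν j / ((μ i + n * lam) * (ν j + n * lam))) * ⟪u i, v j⟫ ^ 2 ∧
    0 ≤ (K * (K + (n * lam) • 1)⁻¹ * K * (K + (n * lam) • 1)⁻¹).trace
        + (L * (L + (n * lam) • 1)⁻¹ * L * (L + (n * lam) • 1)⁻¹).trace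
        - 2 * (K * (K + (n * lam) • 1)⁻¹ * L * (L + (n * lam) • 1)⁻¹).trace := by
  have hwu := EuclideanSpace.dotProduct_ofLp_eq_ite hu
  have hwv := EuclideanSpace.dotProduct_ofLp_eq_ite hv
  replace hKdec : K = spectralSum (fun i => (u i).ofLp) μ := hKdec
  replace hLdec : L = spectralSum (fun j => (v j).ofLp) ν := hLdec
  subst hKdec hLdec
  -- `Fin n` being inhabited forces `n ≥ 1`, hence `n * lam > 0`.
  have hreg {x : Fin n → ℝ} (hx : ∀ i, 0 ≤ x i) (i : Fin n) : x i + n * lam ≠ 0 := by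
    have hn : (0 : ℝ) < n := by exact_mod_cast i.pos
    exact (add_pos_of_nonneg_of_pos (hx i) (mul_pos hn hlam)).ne'
  have hA := spectralSum_mul_inv_add_smul_one hwu (hreg (nonneg_of_posSemidef_spectralSum hwu hK))
  have hB := spectralSum_mul_inv_add_smul_one hwv (hreg (nonneg_of_posSemidef_spectralSum hwv hL))
  have assoc4 (A B C D : Matrix (Fin n) (Fin n) ℝ) : A * B * C * D = (A * B) * (C * D) :=
    mul_assoc _ _ _
  rw [assoc4, assoc4, assoc4, hA, hB]
  refine ⟨?_, sub_nonneg.mpr <|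
    two_mul_trace_mul_le (isSymm_spectralSum _ _) (isSymm_spectralSum _ _)⟩
  rw [spectralSum_mul_spectralSum hwu, spectralSum_mul_spectralSum hwv, trace_spectralSum hwu,
    trace_spectralSum hwv, trace_spectralSum_mul_spectralSum]
  simp only [Pi.mul_apply, EuclideanSpace.real_inner_eq_dotProduct, div_mul_div_comm, sq]

theorem stmt_15 {n : ℕ} (hn : 1 ≤ n) (lam : ℝ) (hlam : 0 < lam)
    (K L : Matrix (Fin n) (Fin n) ℝ) (hK : K.PosSemidef) (hL : L.PosSemidef)
    (μ ν : Fin n → ℝ) (u v : Fin n → EuclideanSpace ℝ (Fin n))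
    (hu : Orthonormal ℝ u) (hv : Orthonormal ℝ v)
    (hKdec : K = ∑ i, μ i • vecMulVec (fun a => u i a) (fun a => u i a))
    (hLdec : L = ∑ j, ν j • vecMulVec (fun a => v j a) (fun a => v j a)) :
    (K * (K + (n * lam) • 1)⁻¹ * K * (K + (n * lam) • 1)⁻¹).trace
        + (L * (L + (n * lam) • 1)⁻¹ * L * (L + (n * lam) • 1)⁻¹).trace
        - 2 * (K * (K + (n * lam) • 1)⁻¹ * L * (L + (n * lam) • 1)⁻¹).trace =
      (∑ i, (μ i / (μ i + n * lam)) ^ 2) + (∑ j, (ν j / (ν j + n * lam)) ^ 2)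
        - 2 * ∑ i, ∑ j, (μ i * ν j / ((μ i + n * lam) * (ν j + n * lam))) * ⟪u i, v j⟫ ^ 2 ∧
    0 ≤ (K * (K + (n * lam) • 1)⁻¹ * K * (K + (n * lam) • 1)⁻¹).trace
        + (L * (L + (n * lam) • 1)⁻¹ * L * (L + (n * lam) • 1)⁻¹).trace
        - 2 * (K * (K + (n * lam) • 1)⁻¹ * L * (L + (n * lam) • 1)⁻¹).trace :=
  stmt_15_general lam hlam K L hK hL μ ν u v hu hv hKdec hLdec
end

section
/- Let n ≥ 1 and let K and L be real symmetric positive semidefinite n×n matrices with K ≠ 0 and L ≠ 0. Then, as λ → +∞, the normalized kernelized Ridge-CCA quantity Tr(K(K+nλI)⁻¹L(L+nλI)⁻¹) / √( Tr(K(K+nλI)⁻¹K(K+nλI)⁻¹) · Tr(L(L+nλI)⁻¹L(L+nλI)⁻¹) ) tends to Tr(K L) / √( Tr(K²) · Tr(L²) ). (For every λ > 0 the denominator is strictly positive, so the ratio is well defined.) -/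
/-!
With `c = nλ`, the rescaled resolvent `c • (A + c • 1)⁻¹ = (c⁻¹ • A + 1)⁻¹` tends to `1` as
`c → ∞`. Numerator and denominator of the Ridge-CCA quotient are both homogeneous of degree two
in the pair of resolvents, so the quotient is unchanged when both are rescaled by `c`, and the
limit follows by continuity at `(1, 1)`, where the denominator is `√(tr K² · tr L²) > 0`.
-/

open Matrix Filter Topology

theorem Commute.ringInverse_right {M₀ : Type*} [MonoidWithZero M₀] {a b : M₀}
    (h : Commute a b) : Commute a (Ring.inverse b) := by
  by_cases hb : IsUnit b
  · obtain ⟨u, rfl⟩ := hb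
    rw [Ring.inverse_unit]
    exact h.units_inv_right
  · rw [Ring.inverse_non_unit _ hb]
    exact Commute.zero_right a

namespace Matrix

section Trace

variable {m n R : Type*} [Fintype m] [Fintype n] [PartialOrder R] [CommRing R] [StarRing R]
  [StarOrderedRing R] [NoZeroDivisors R]

lemma trace_conjTranspose_mul_self_pos {B : Matrix m n R} (hB : B ≠ 0) : 0 < (Bᴴ * B).trace :=
  (posSemidef_conjTranspose_mul_self B).trace_nonneg.lt_of_ne'
    (mt trace_conjTranspose_mul_self_eq_zero_iff.mp hB)

lemma IsHermitian.trace_mul_self_pos {B : Matrix n n R} (hB : B.IsHermitian) (hB0 : B ≠ 0) :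
    0 < (B * B).trace := by
  simpa only [hB.eq] using trace_conjTranspose_mul_self_pos hB0

end Trace

section Alignment

variable {ι : Type*} [Fintype ι]

/-- The Ridge-CCA quotient is `weightedAlignment K L (K + nλ • 1)⁻¹ (L + nλ • 1)⁻¹`, and CKA is
`weightedAlignment K L 1 1`. -/
noncomputable def weightedAlignment (K L P Q : Matrix ι ι ℝ) : ℝ :=
  (K * P * L * Q).trace / √((K * P * K * P).trace * (L * Q * L * Q).trace)

lemma trace_mul_smul_mul_smul (X Y P Q : Matrix ι ι ℝ) (c : ℝ) :
    (X * (c • P) * Y * (c • Q)).trace = c ^ 2 * (X * P * Y * Q).trace := by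
  simp only [Matrix.mul_smul, Matrix.smul_mul, trace_smul, smul_eq_mul]
  ring

lemma weightedAlignment_smul (K L P Q : Matrix ι ι ℝ) {c : ℝ} (hc : c ≠ 0) :
    weightedAlignment K L (c • P) (c • Q) = weightedAlignment K L P Q := by
  simp only [weightedAlignment, trace_mul_smul_mul_smul]
  rw [mul_mul_mul_comm, ← pow_two, Real.sqrt_mul (by positivity), ← pow_mul,
    show c ^ (2 * 2) = (c ^ 2) ^ 2 by ring, Real.sqrt_sq (by positivity),
    mul_div_mul_left _ _ (by positivity)]

lemma continuousAt_weightedAlignment (K L P Q : Matrix ι ι ℝ)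
    (h : √((K * P * K * P).trace * (L * Q * L * Q).trace) ≠ 0) :
    ContinuousAt (fun p : Matrix ι ι ℝ × Matrix ι ι ℝ => weightedAlignment K L p.1 p.2)
      (P, Q) := by
  unfold weightedAlignment
  exact ContinuousAt.div (by fun_prop) (by fun_prop) h

end Alignment

variable {ι : Type*} [Fintype ι] [DecidableEq ι]

lemma commute_nonsing_inv_right {R : Type*} [CommRing R] {A M : Matrix ι ι R}
    (h : Commute A M) : Commute A M⁻¹ := by
  rw [nonsing_inv_eq_ringInverse]
  exact h.ringInverse_right

lemma smul_inv_add_smul_one {𝕜 : Type*} [Field 𝕜] (A : Matrix ι ι 𝕜) {c : 𝕜} (hc : c ≠ 0) :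
    c • (A + c • 1)⁻¹ = (c⁻¹ • A + 1)⁻¹ := by
  have h : c⁻¹ • A + 1 = (Units.mk0 c hc)⁻¹ • (A + c • 1) := by
    rw [Units.smul_def, Units.val_inv_eq_inv_val, Units.val_mk0, smul_add, smul_smul,
      inv_mul_cancel₀ hc, one_smul]
  by_cases hM : IsUnit (A + c • 1).det
  · rw [h, Matrix.inv_smul' _ _ hM, inv_inv, Units.smul_def, Units.val_mk0]
  · have hM' : ¬IsUnit (c⁻¹ • A + 1).det := by
      rwa [h, Units.smul_def, det_smul, IsUnit.mul_iff, not_and_or, or_iff_right]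
      simp [hc]
    rw [nonsing_inv_apply_not_isUnit _ hM, nonsing_inv_apply_not_isUnit _ hM', smul_zero]

lemma tendsto_smul_inv_add_smul_one (A : Matrix ι ι ℝ) :
    Tendsto (fun c : ℝ => c • (A + c • 1)⁻¹) atTop (𝓝 1) := by
  have hlin : Tendsto (fun c : ℝ => c⁻¹ • A + 1) atTop (𝓝 1) := by
    simpa using ((tendsto_inv_atTop_zero : Tendsto (fun c : ℝ => c⁻¹) atTop (𝓝 0)).smul_const
      A).add_const (1 : Matrix ι ι ℝ)
  have hinv : Tendsto Inv.inv (𝓝 (1 : Matrix ι ι ℝ)) (𝓝 1) := by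
    simpa using (continuousAt_matrix_inv (1 : Matrix ι ι ℝ)
      (by rw [det_one]; exact NormedRing.inverse_continuousAt 1)).tendsto
  refine (hinv.comp hlin).congr' ?_
  filter_upwards [eventually_ne_atTop 0] with c hc
  exact (smul_inv_add_smul_one A hc).symm

lemma PosSemidef.trace_mul_inv_add_smul_one_sq_pos {A : Matrix ι ι ℝ} (hA : A.PosSemidef)
    (hA0 : A ≠ 0) {c : ℝ} (hc : 0 < c) :
    0 < (A * (A + c • 1)⁻¹ * A * (A + c • 1)⁻¹).trace := by
  set M := A + c • 1
  have hMpd : M.PosDef := PosDef.posSemidef_add hA (PosDef.one.smul hc)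
  have hM : IsUnit M.det := (isUnit_iff_isUnit_det M).mp hMpd.isUnit
  have hcomm : Commute A M⁻¹ :=
    commute_nonsing_inv_right ((Commute.refl A).add_right ((Commute.one_right A).smul_right c))
  have hherm : (A * M⁻¹).IsHermitian := by
    rw [IsHermitian, conjTranspose_mul, hMpd.isHermitian.inv.eq, hA.isHermitian.eq, hcomm.eq]
  have hne : A * M⁻¹ ≠ 0 := fun h => hA0 <| by
    simpa [mul_assoc, nonsing_inv_mul M hM] using congrArg (· * M) h
  simpa only [mul_assoc] using hherm.trace_mul_self_pos hne

end Matrix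

theorem stmt_17 {n : ℕ} (hn : 1 ≤ n) (K L : Matrix (Fin n) (Fin n) ℝ)
    (hK : K.PosSemidef) (hL : L.PosSemidef) (hK0 : K ≠ 0) (hL0 : L ≠ 0) :
    (∀ lam : ℝ, 0 < lam →
      0 < Real.sqrt ((K * (K + (n * lam) • 1)⁻¹ * K * (K + (n * lam) • 1)⁻¹).trace *
          (L * (L + (n * lam) • 1)⁻¹ * L * (L + (n * lam) • 1)⁻¹).trace)) ∧
    Tendsto (fun lam : ℝ =>
        (K * (K + (n * lam) • 1)⁻¹ * L * (L + (n * lam) • 1)⁻¹).trace /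
          Real.sqrt ((K * (K + (n * lam) • 1)⁻¹ * K * (K + (n * lam) • 1)⁻¹).trace *
            (L * (L + (n * lam) • 1)⁻¹ * L * (L + (n * lam) • 1)⁻¹).trace))
      atTop (nhds ((K * L).trace / Real.sqrt ((K * K).trace * (L * L).trace))) := by
  have hn' : (0 : ℝ) < n := by exact_mod_cast hn
  refine ⟨fun lam hlam => Real.sqrt_pos.mpr (mul_pos
    (hK.trace_mul_inv_add_smul_one_sq_pos hK0 (mul_pos hn' hlam))
    (hL.trace_mul_inv_add_smul_one_sq_pos hL0 (mul_pos hn' hlam))), ?_⟩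
  have hscale : Tendsto (fun lam : ℝ => (n : ℝ) * lam) atTop atTop :=
    tendsto_id.const_mul_atTop hn'
  have hres := ((tendsto_smul_inv_add_smul_one K).prodMk_nhds
    (tendsto_smul_inv_add_smul_one L)).comp hscale
  have hden : √((K * K).trace * (L * L).trace) ≠ 0 :=
    (Real.sqrt_pos.mpr (mul_pos (hK.isHermitian.trace_mul_self_pos hK0)
      (hL.isHermitian.trace_mul_self_pos hL0))).ne'
  have hlim := (continuousAt_weightedAlignment K L 1 1 (by simpa using hden)).tendsto.comp hres
  simp only [weightedAlignment, mul_one] at hlim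
  refine hlim.congr' ?_
  filter_upwards [eventually_gt_atTop 0] with lam hlam
  exact weightedAlignment_smul K L _ _ (mul_pos hn' hlam).ne'
end
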